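/- Let n ≥ 2, m ≥ 2, and let ρ be an n-tuple of transpositions of the symmetric group S_m. Then: (i) N(ρ) is contained in the stabilizer Aut(ρ); (ii) N(ρ) is a normal subgroup of Aut(ρ); and (iii) for every β ∈ B_n one has N(ρ · β) = β^{-1} N(ρ) β. -/

import Mathlib

open Equiv MulOpposite

namespace ApostolakisMoves

variable {G : Type*} [Group G]

/-- The `i`-th Hurwitz move on sequences of group elements. -/
def hFun (i : ℕ) (f : ℕ → G) : ℕ → G := fun j =>
  if j = i then f i * f (i + 1) * (f i)⁻¹ else if j = i + 1 then f i else f j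

/-- The inverse of the `i`-th Hurwitz move. -/
def hInv (i : ℕ) (f : ℕ → G) : ℕ → G := fun j =>
  if j = i then f (i + 1) else if j = i + 1 then (f (i + 1))⁻¹ * f i * f (i + 1) else f j

/-- The `i`-th Hurwitz move as a permutation of sequences of group elements. -/
def hGen (G : Type*) [Group G] (i : ℕ) : Equiv.Perm (ℕ → G) where
  toFun := hFun i
  invFun := hInv i
  left_inv := by
    intro f
    funext j
    have h1 : i + 1 ≠ i := by omega
    by_cases hj : j = i
    · subst hj; simp [hFun, hInv, h1]
    · by_cases hj' : j = i + 1
      · subst hj'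
        simp only [hFun, hInv, h1, if_neg, if_pos, eq_self_iff_true, if_true, if_false]
        group
      · simp [hFun, hInv, hj, hj']
  right_inv := by
    intro f
    funext j
    have h1 : i + 1 ≠ i := by omega
    by_cases hj : j = i
    · subst hj
      simp only [hFun, hInv, h1, if_neg, if_pos, eq_self_iff_true, if_true, if_false]
      group
    · by_cases hj' : j = i + 1
      · subst hj'; simp [hFun, hInv, h1]
      · simp [hFun, hInv, hj, hj']

@[simp] lemma hGen_apply (i : ℕ) (f : ℕ → G) : hGen G i f = hFun i f := rfl

lemma braid_rel (G : Type*) [Group G] (i : ℕ) :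
    hGen G i * hGen G (i + 1) * hGen G i = hGen G (i + 1) * hGen G i * hGen G (i + 1) := by
  apply Equiv.ext
  intro f
  funext k
  simp only [Equiv.Perm.mul_apply, hGen_apply, hFun]
  split_ifs <;> first | omega | group

lemma comm_rel (G : Type*) [Group G] {i j : ℕ} (h : i + 2 ≤ j) :
    hGen G i * hGen G j = hGen G j * hGen G i := by
  apply Equiv.ext
  intro f
  funext k
  simp only [Equiv.Perm.mul_apply, hGen_apply, hFun]
  split_ifs <;> first | rfl | omega

/-- The braid relations, as a set of elements of the free group on `n - 1` generators. -/
def braidRels (n : ℕ) : Set (FreeGroup (Fin (n - 1))) :=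
  {r | ∃ i j : Fin (n - 1),
    ((i : ℕ) + 1 = (j : ℕ) ∧
      r = .of i * .of j * .of i * (.of j * .of i * .of j)⁻¹) ∨
    ((i : ℕ) + 2 ≤ (j : ℕ) ∧ r = .of i * .of j * (.of j * .of i)⁻¹)}

/-- The braid group on `n` strands, presented by the generators `β_0, …, β_{n-2}` subject to
the braid relations. -/
abbrev BraidGroup (n : ℕ) := PresentedGroup (braidRels n)

/-- The standard generator `β_i` of the braid group on `n` strands (equal to `1` if `i` is
out of range). -/
def braidGen (n i : ℕ) : BraidGroup n :=
  if h : i < n - 1 then PresentedGroup.of ⟨i, h⟩ else 1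

/-- The Hurwitz (right) action of the braid group, as a homomorphism into the opposite of the
permutation group of sequences. -/
def braidActHom (n : ℕ) (G : Type*) [Group G] : BraidGroup n →* (Equiv.Perm (ℕ → G))ᵐᵒᵖ :=
  PresentedGroup.toGroup (f := fun i : Fin (n - 1) => op (hGen G (i : ℕ))) (by
    rintro r ⟨i, j, ⟨hij, rfl⟩ | ⟨hij, rfl⟩⟩
    · have key : hGen G (i : ℕ) * hGen G (j : ℕ) * hGen G (i : ℕ)
          = hGen G (j : ℕ) * hGen G (i : ℕ) * hGen G (j : ℕ) := by
        rw [← hij]; exact braid_rel G i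
      simp only [map_mul, map_inv, FreeGroup.lift_apply_of]
      rw [mul_inv_eq_one]
      simp only [← op_mul]
      exact congrArg op (by rw [← mul_assoc, ← mul_assoc, key])
    · have key : hGen G (i : ℕ) * hGen G (j : ℕ) = hGen G (j : ℕ) * hGen G (i : ℕ) :=
        comm_rel G hij
      simp only [map_mul, map_inv, FreeGroup.lift_apply_of]
      rw [mul_inv_eq_one]
      simp only [← op_mul]
      exact congrArg op key.symm)

/-- The Hurwitz right action: `ρ · β`. -/
def act {n : ℕ} {G : Type*} [Group G] (ρ : ℕ → G) (β : BraidGroup n) : ℕ → G :=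
  (braidActHom n G β).unop ρ

lemma act_one {n : ℕ} (ρ : ℕ → G) : act ρ (1 : BraidGroup n) = ρ := by
  simp [act]

lemma act_mul {n : ℕ} (ρ : ℕ → G) (a b : BraidGroup n) :
    act ρ (a * b) = act (act ρ a) b := by
  simp [act, map_mul]

/-- `Aut ρ`: the stabilizer of the sequence `ρ` under the Hurwitz action of the braid group. -/
def stab (n : ℕ) {G : Type*} [Group G] (ρ : ℕ → G) : Subgroup (BraidGroup n) where
  carrier := {β | act ρ β = ρ}
  one_mem' := act_one ρ
  mul_mem' := by
    intro a b ha hb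
    simp only [Set.mem_setOf_eq] at *
    rw [act_mul, ha, hb]
  inv_mem' := by
    intro a ha
    simp only [Set.mem_setOf_eq] at *
    have h := act_mul ρ a a⁻¹
    rw [mul_inv_cancel, act_one, ha] at h
    exact h.symm


/-- The transposition `(1 2)` of `S₄`. -/
def t12 : Equiv.Perm (Fin 4) := Equiv.swap 0 1
/-- The transposition `(1 3)` of `S₄`. -/
def t13 : Equiv.Perm (Fin 4) := Equiv.swap 0 2
/-- The transposition `(1 4)` of `S₄`. -/
def t14 : Equiv.Perm (Fin 4) := Equiv.swap 0 3
/-- The transposition `(2 3)` of `S₄`. -/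
def t23 : Equiv.Perm (Fin 4) := Equiv.swap 1 2
/-- The transposition `(1 2)` of `S₃`. -/
def s12 : Equiv.Perm (Fin 3) := Equiv.swap 0 1
/-- The transposition `(2 3)` of `S₃`. -/
def s23 : Equiv.Perm (Fin 3) := Equiv.swap 1 2

/-- The tuple `ρ_I^n` : `(1 2)` in positions `0` and `1`, `(1 4)` in the positions of `I`,
and `(2 3)` everywhere else (an `n`-tuple is encoded as a function `ℕ → S₄` whose values at
positions `≥ n` are the irrelevant constant `(2 3)`). -/
def rhoI (I : Finset ℕ) : ℕ → Equiv.Perm (Fin 4) := fun i =>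
  if i < 2 then t12 else if i ∈ I then t14 else t23

/-- The tuple `ρ̃_I^n` : `(1 2)` in positions `0` and `1`, `(2 3)` in the positions of `I`,
and `(1 4)` everywhere else. -/
def rhoTI (I : Finset ℕ) : ℕ → Equiv.Perm (Fin 4) := fun i =>
  if i < 2 then t12 else if i ∈ I then t23 else t14

/-- The tuple `ρ(n)` : `(1 2)` in positions `0` and `1` and `(2 3)` everywhere else. -/
def rho3 : ℕ → Equiv.Perm (Fin 3) := fun i => if i < 2 then s12 else s23

/-- `L(n) = Aut(ρ(n))`, the liftable braid subgroup. -/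
def Ln (n : ℕ) : Subgroup (BraidGroup n) := stab n rho3

/-- The braid `δ₄ = w⁻¹ β₄ w`, `w = β₃ β₂ β₁² β₂ β₃² β₂ β₁`. -/
def delta4 (n : ℕ) : BraidGroup n :=
  (braidGen n 3 * braidGen n 2 * (braidGen n 1) ^ 2 * braidGen n 2 * (braidGen n 3) ^ 2 *
      braidGen n 2 * braidGen n 1)⁻¹ *
    braidGen n 4 *
    (braidGen n 3 * braidGen n 2 * (braidGen n 1) ^ 2 * braidGen n 2 * (braidGen n 3) ^ 2 *
      braidGen n 2 * braidGen n 1)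

/-- The braid `δ₆ = v⁻¹ δ₄ v`, `v = β₅⁻¹ β₄⁻¹ β₃⁻¹ β₂⁻¹ β₆⁻¹ β₅⁻¹ β₄⁻¹ β₃⁻¹`. -/
def delta6 (n : ℕ) : BraidGroup n :=
  ((braidGen n 5)⁻¹ * (braidGen n 4)⁻¹ * (braidGen n 3)⁻¹ * (braidGen n 2)⁻¹ *
      (braidGen n 6)⁻¹ * (braidGen n 5)⁻¹ * (braidGen n 4)⁻¹ * (braidGen n 3)⁻¹)⁻¹ *
    delta4 n *
    ((braidGen n 5)⁻¹ * (braidGen n 4)⁻¹ * (braidGen n 3)⁻¹ * (braidGen n 2)⁻¹ *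
      (braidGen n 6)⁻¹ * (braidGen n 5)⁻¹ * (braidGen n 4)⁻¹ * (braidGen n 3)⁻¹)

/-- The generating set of the subgroup `N(ρ)` of colored-braid moves: conjugates `w β_i³ w⁻¹`
where the entries in positions `i, i+1` of `ρ · w` are distinct transpositions sharing exactly
one point of their supports (move `𝓜`), and conjugates `w β_i² w⁻¹` where those entries are
transpositions with disjoint supports (move `𝓟`). -/
def NSet (n : ℕ) {m : ℕ} (ρ : ℕ → Equiv.Perm (Fin m)) : Set (BraidGroup n) :=
  {x | ∃ w : BraidGroup n, ∃ i : ℕ, i < n - 1 ∧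
    ((x = w * (braidGen n i) ^ 3 * w⁻¹ ∧
        (act ρ w i).IsSwap ∧ (act ρ w (i + 1)).IsSwap ∧
        ((act ρ w i).support ∩ (act ρ w (i + 1)).support).card = 1) ∨
      (x = w * (braidGen n i) ^ 2 * w⁻¹ ∧
        (act ρ w i).IsSwap ∧ (act ρ w (i + 1)).IsSwap ∧
        Disjoint (act ρ w i).support (act ρ w (i + 1)).support))}

/-- The subgroup `N(ρ)` generated by the colored-braid moves `𝓜` and `𝓟`. -/
def N (n : ℕ) {m : ℕ} (ρ : ℕ → Equiv.Perm (Fin m)) : Subgroup (BraidGroup n) :=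
  Subgroup.closure (NSet n ρ)

/-- The ordered product `β_a β_{a+1} ⋯ β_b` of braid generators. -/
def genProd (n a b : ℕ) : BraidGroup n :=
  ((List.range' a (b + 1 - a)).map (braidGen n)).prod

end ApostolakisMoves

/-! Two transpositions of `S_m` whose supports meet in one point satisfy the braid relation, and
two with disjoint supports commute; since `β_i` acts on the entries in positions `i, i + 1` by the
Hurwitz move `(a, b) ↦ (a b a⁻¹, a)`, whose cube (resp. square) is the identity on such pairs,
every generator `w β_i^k w⁻¹` of `N(ρ)` fixes `ρ`. Replacing `w` by `β w` transports the generators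
for `ρ · β` to those for `ρ`, which gives `N(ρ · β) = β⁻¹ N(ρ) β`; taking `β ∈ Aut(ρ)` yields
normality. -/

namespace Equiv.Perm

variable {α : Type*} [DecidableEq α]

theorem IsSwap.eq_swap_apply {σ : Perm α} (hσ : σ.IsSwap) {c : α} (hc : σ c ≠ c) :
    σ = swap c (σ c) := by
  obtain ⟨x, y, -, rfl⟩ := hσ
  by_cases hx : c = x
  · subst hx; rw [swap_apply_left]
  by_cases hy : c = y
  · subst hy; rw [swap_apply_right, swap_comm]
  · exact absurd (swap_apply_of_ne_of_ne hx hy) hc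

theorem swap_braid_of_ne {c x y : α} (hx : x ≠ c) (hy : y ≠ c) (hxy : x ≠ y) :
    swap c x * swap c y * swap c x = swap c y * swap c x * swap c y := by
  have lhs : swap c x * swap y c * swap c x = swap x y := swap_mul_swap_mul_swap hy hxy.symm
  have rhs : swap c y * swap x c * swap c y = swap y x := swap_mul_swap_mul_swap hx hxy
  rw [swap_comm y c] at lhs
  rw [swap_comm x c] at rhs
  rw [lhs, rhs, swap_comm]

variable [Fintype α]

theorem IsSwap.braid_of_card_support_inter_eq_one {a b : Perm α} (ha : a.IsSwap) (hb : b.IsSwap)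
    (h : (a.support ∩ b.support).card = 1) : a * b * a = b * a * b := by
  obtain ⟨c, hc⟩ := Finset.card_eq_one.mp h
  obtain ⟨hca, hcb⟩ := Finset.mem_inter.mp (hc ▸ Finset.mem_singleton_self c)
  have hab : a c ≠ b c := fun hab => by
    have : a c ∈ a.support ∩ b.support :=
      Finset.mem_inter.mpr ⟨apply_mem_support.mpr hca, hab ▸ apply_mem_support.mpr hcb⟩
    exact mem_support.mp hca (Finset.mem_singleton.mp (hc ▸ this))
  rw [ha.eq_swap_apply (mem_support.mp hca), hb.eq_swap_apply (mem_support.mp hcb)]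
  exact swap_braid_of_ne (mem_support.mp hca) (mem_support.mp hcb) hab

end Equiv.Perm

namespace ApostolakisMoves

section Hurwitz

variable {G : Type*} [Group G]

def hurwitzPair (p : G × G) : G × G := (p.1 * p.2 * p.1⁻¹, p.1)

theorem hurwitzPair_iterate_two_of_commute {a b : G} (h : Commute a b) :
    hurwitzPair^[2] (a, b) = (a, b) := by
  simp [hurwitzPair, h.mul_inv_cancel, h.symm.mul_inv_cancel]

theorem hurwitzPair_iterate_three_of_braid {a b : G} (h : a * b * a = b * a * b) :
    hurwitzPair^[3] (a, b) = (a, b) := by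
  have h₁ : a * b * a⁻¹ * a * (a * b * a⁻¹)⁻¹ = b :=
    calc a * b * a⁻¹ * a * (a * b * a⁻¹)⁻¹ = a * b * a * (b⁻¹ * a⁻¹) := by group
      _ = b := by rw [h]; group
  have h₂ : b * (a * b * a⁻¹) * b⁻¹ = a :=
    calc b * (a * b * a⁻¹) * b⁻¹ = b * a * b * (a⁻¹ * b⁻¹) := by group
      _ = a := by rw [← h]; group
  simp only [Function.iterate_succ_apply', Function.iterate_zero_apply, hurwitzPair, h₁, h₂]

theorem hFun_iterate_apply_of_ne (f : ℕ → G) {i j : ℕ} (hi : j ≠ i) (hi' : j ≠ i + 1) (k : ℕ) :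
    (hFun i)^[k] f j = f j := by
  induction k with
  | zero => rfl
  | succ k ih => rw [Function.iterate_succ_apply', hFun, if_neg hi, if_neg hi', ih]

theorem hFun_iterate_pair (f : ℕ → G) (i k : ℕ) :
    ((hFun i)^[k] f i, (hFun i)^[k] f (i + 1)) = hurwitzPair^[k] (f i, f (i + 1)) := by
  induction k with
  | zero => rfl
  | succ k ih =>
    simp only [Function.iterate_succ_apply', ← ih, hurwitzPair, hFun, if_pos,
      if_neg (Nat.succ_ne_self i)]

theorem hFun_iterate_eq_self {f : ℕ → G} {i k : ℕ}
    (h : hurwitzPair^[k] (f i, f (i + 1)) = (f i, f (i + 1))) : (hFun i)^[k] f = f := by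
  have hpair := (hFun_iterate_pair f i k).trans h
  funext j
  by_cases hi : j = i
  · subst hi; exact congrArg Prod.fst hpair
  by_cases hi' : j = i + 1
  · subst hi'; exact congrArg Prod.snd hpair
  · exact hFun_iterate_apply_of_ne f hi hi' k

end Hurwitz

section Action

variable {n : ℕ} {G : Type*} [Group G]

theorem mem_stab {ρ : ℕ → G} {β : BraidGroup n} : β ∈ stab n ρ ↔ act ρ β = ρ := Iff.rfl

theorem act_act_inv (ρ : ℕ → G) (β : BraidGroup n) : act (act ρ β) β⁻¹ = ρ := by
  rw [← act_mul, mul_inv_cancel, act_one]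

theorem act_conj_eq_self {ρ : ℕ → G} {w g : BraidGroup n} (hg : act (act ρ w) g = act ρ w) :
    act ρ (w * g * w⁻¹) = ρ := by
  rw [act_mul, act_mul, hg, act_act_inv]

theorem act_braidGen {i : ℕ} (hi : i < n - 1) (ρ : ℕ → G) :
    act ρ (braidGen n i) = hFun i ρ := by
  simp only [act, braidGen, dif_pos hi, braidActHom, PresentedGroup.toGroup.of]
  rfl

theorem act_braidGen_pow {i : ℕ} (hi : i < n - 1) (ρ : ℕ → G) (k : ℕ) :
    act ρ (braidGen n i ^ k) = (hFun i)^[k] ρ := by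
  induction k with
  | zero => rw [pow_zero, act_one]; rfl
  | succ k ih => rw [pow_succ, act_mul, ih, act_braidGen hi, Function.iterate_succ_apply']

end Action

section Moves

variable {n m : ℕ}

theorem act_eq_self_of_mem_NSet {ρ : ℕ → Perm (Fin m)} {x : BraidGroup n} (hx : x ∈ NSet n ρ) :
    act ρ x = ρ := by
  obtain ⟨w, i, hi, ⟨rfl, ha, hb, hcard⟩ | ⟨rfl, -, -, hdisj⟩⟩ := hx
  · refine act_conj_eq_self ?_
    rw [act_braidGen_pow hi]
    exact hFun_iterate_eq_self (hurwitzPair_iterate_three_of_braid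
      (Perm.IsSwap.braid_of_card_support_inter_eq_one ha hb hcard))
  · refine act_conj_eq_self ?_
    rw [act_braidGen_pow hi]
    exact hFun_iterate_eq_self (hurwitzPair_iterate_two_of_commute
      (Perm.disjoint_iff_disjoint_support.mpr hdisj).commute)

theorem conj_mem_NSet_of_mem_NSet_act {ρ : ℕ → Perm (Fin m)} {β x : BraidGroup n}
    (hx : x ∈ NSet n (act ρ β)) : β * x * β⁻¹ ∈ NSet n ρ := by
  obtain ⟨w, i, hi, ⟨rfl, h⟩ | ⟨rfl, h⟩⟩ := hx
  · exact ⟨β * w, i, hi, .inl ⟨by group, by rwa [act_mul]⟩⟩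
  · exact ⟨β * w, i, hi, .inr ⟨by group, by rwa [act_mul]⟩⟩

theorem NSet_act (ρ : ℕ → Perm (Fin m)) (β : BraidGroup n) :
    NSet n (act ρ β) = MulAut.conj β⁻¹ '' NSet n ρ := by
  ext x
  constructor
  · intro hx
    exact ⟨_, conj_mem_NSet_of_mem_NSet_act hx, by simp [mul_assoc]⟩
  · rintro ⟨y, hy, rfl⟩
    rw [← act_act_inv ρ β] at hy
    simpa using conj_mem_NSet_of_mem_NSet_act (β := β⁻¹) hy

theorem N_act (ρ : ℕ → Perm (Fin m)) (β : BraidGroup n) :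
    N n (act ρ β) = (N n ρ).map (MulAut.conj β⁻¹).toMonoidHom := by
  rw [N, N, NSet_act, MonoidHom.map_closure]
  rfl

theorem N_le_stab (ρ : ℕ → Perm (Fin m)) : N n ρ ≤ stab n ρ :=
  (Subgroup.closure_le _).mpr fun _ hx => act_eq_self_of_mem_NSet hx

theorem stab_le_normalizer_N (ρ : ℕ → Perm (Fin m)) :
    stab n ρ ≤ Subgroup.normalizer (N n ρ : Set (BraidGroup n)) := by
  intro g hg
  rw [Subgroup.mem_normalizer_iff_map_conj_eq]
  have := N_act ρ g⁻¹
  rw [mem_stab.mp ((stab n ρ).inv_mem hg), inv_inv] at this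
  exact this.symm

end Moves

theorem N_le_normal_natural_general (n m : ℕ)
    (ρ : ℕ → Equiv.Perm (Fin m)) :
    N n ρ ≤ stab n ρ ∧
    ((N n ρ).subgroupOf (stab n ρ)).Normal ∧
    (∀ β : BraidGroup n, N n (act ρ β) = (N n ρ).map (MulAut.conj β⁻¹).toMonoidHom) :=
  ⟨N_le_stab ρ, (Subgroup.normal_subgroupOf_iff_le_normalizer (N_le_stab ρ)).mpr
    (stab_le_normalizer_N ρ), N_act ρ⟩

/-- For any `n`-tuple `ρ` of transpositions of `S_m`: `N(ρ)` is contained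
in `Aut(ρ)`, it is normal there, and it is natural: `N(ρ · β) = β⁻¹ N(ρ) β` for all `β`. -/
theorem N_le_normal_natural (n m : ℕ) (hn : 2 ≤ n) (hm : 2 ≤ m)
    (ρ : ℕ → Equiv.Perm (Fin m)) (hρ : ∀ i < n, (ρ i).IsSwap) :
    N n ρ ≤ stab n ρ ∧
    ((N n ρ).subgroupOf (stab n ρ)).Normal ∧
    (∀ β : BraidGroup n, N n (act ρ β) = (N n ρ).map (MulAut.conj β⁻¹).toMonoidHom) :=
  N_le_normal_natural_general n m ρ

end ApostolakisMoves
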